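/- For the right isosceles triangle cavity Ω = {(x₁,x₂): 0 ≤ x₁ ≤ 1, 0 ≤ x₂ ≤ 1/2 - |1/2 - x₁|}, the resistance functional equals F(Ω) = √2. Explicitly, (3/8)[∫∫_{ξ < -tan φ}(1 + cos(π/2 + 2φ)) cos φ + ∫∫_{ξ > 1 - tan φ}(1 + cos(2φ - π/2)) cos φ + ∫∫_{-tan φ < ξ < 1 - tan φ} 2 cos φ] dφ dξ = √2, where all regions are subsets of (-π/2,π/2) × [0,1]. -/

import Mathlib

/-! Integrating over the entry point `ξ` first turns each integral into an integral over the
angle `φ` of the integrand times the length of the `ξ`-slice of the region: `min 1 (-tan φ)`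
clipped at `0` for the left-leg region, and `1 - |tan φ|` clipped at `0` for the
double-reflection region. Splitting at `φ = -π/4, 0, π/4` leaves elementary integrals of
polynomials in `sin φ` and `cos φ`. The right-leg integral equals the left-leg one by the symmetry
`(φ, ξ) ↦ (-φ, 1 - ξ)` of the triangle. The three integrals are `2 - 2√2/3`, `2 - 2√2/3` and
`4√2 - 4`, and `3/8` of their sum is `√2`. -/

open Real MeasureTheory Set

theorem setIntegral_comp_fst_eq_setIntegral_measureReal_smul {α β E : Type*}
    [MeasurableSpace α] [MeasurableSpace β] [NormedAddCommGroup E] [NormedSpace ℝ E]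
    [CompleteSpace E] {μ : Measure α} {ν : Measure β} [SFinite μ] [SFinite ν]
    {s : Set α} {t : α → Set β} (hs : MeasurableSet s)
    (hst : MeasurableSet {p : α × β | p.1 ∈ s ∧ p.2 ∈ t p.1}) {g : α → E}
    (hg : IntegrableOn (fun p ↦ g p.1) {p : α × β | p.1 ∈ s ∧ p.2 ∈ t p.1} (μ.prod ν)) :
    ∫ p in {p : α × β | p.1 ∈ s ∧ p.2 ∈ t p.1}, g p.1 ∂μ.prod ν =
      ∫ x in s, ν.real (t x) • g x ∂μ := by
  rw [← integral_indicator hst, integral_prod _ (hg.integrable_indicator hst),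
    ← integral_indicator hs]
  congr 1 with x
  by_cases hx : x ∈ s
  · have ht : MeasurableSet (t x) := by
      simpa [preimage, hx] using measurable_prodMk_left (x := x) hst
    rw [indicator_of_mem hx, ← integral_indicator_const _ ht]
    congr 1 with y
    by_cases hy : y ∈ t x <;> simp [indicator, hx, hy]
  · simp [indicator, hx]

theorem setIntegral_comp_fst_eq_intervalIntegral_volume_real {a b c d : ℝ} (hab : a ≤ b)
    {t : ℝ → Set ℝ} (ht : ∀ x, t x ⊆ Icc c d)
    (hmeas : MeasurableSet {p : ℝ × ℝ | p.1 ∈ Ioo a b ∧ p.2 ∈ t p.1}) {g : ℝ → ℝ}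
    (hg : Continuous g) :
    ∫ p in {p : ℝ × ℝ | p.1 ∈ Ioo a b ∧ p.2 ∈ t p.1}, g p.1 =
      ∫ x in a..b, volume.real (t x) * g x := by
  have hint : IntegrableOn (fun p : ℝ × ℝ ↦ g p.1) {p | p.1 ∈ Ioo a b ∧ p.2 ∈ t p.1} := by
    refine ((hg.comp continuous_fst).continuousOn.integrableOn_compact
      (isCompact_Icc.prod isCompact_Icc) (K := Icc a b ×ˢ Icc c d)).mono_set ?_
    rintro p ⟨hp₁, hp₂⟩
    exact ⟨Ioo_subset_Icc_self hp₁, ht _ hp₂⟩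
  rw [Measure.volume_eq_prod] at hint ⊢
  rw [setIntegral_comp_fst_eq_setIntegral_measureReal_smul measurableSet_Ioo hmeas hint,
    intervalIntegral.integral_of_le hab, integral_Ioc_eq_integral_Ioo]
  simp_rw [smul_eq_mul]

theorem volume_real_Icc_inter_Iio (a b u : ℝ) :
    volume.real (Icc a b ∩ Iio u) = max (min b u - a) 0 := by
  rw [← measureReal_congr ((Ioo_ae_eq_Icc (μ := volume)).inter (ae_eq_refl (Iio u))),
    Ioo_inter_Iio, volume_real_Ioo]

theorem volume_real_Icc_inter_Ioo (a b u v : ℝ) :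
    volume.real (Icc a b ∩ Ioo u v) = max (min b v - max a u) 0 := by
  rw [← measureReal_congr ((Ioo_ae_eq_Icc (μ := volume)).inter (ae_eq_refl (Ioo u v))),
    Ioo_inter_Ioo, volume_real_Ioo]

theorem volume_real_Icc_inter_Ioo_neg_one_sub (t : ℝ) :
    volume.real (Icc 0 1 ∩ Ioo (-t) (1 - t)) = max (1 - |t|) 0 := by
  rw [volume_real_Icc_inter_Ioo]
  rcases le_total 0 t with ht | ht
  · rw [abs_of_nonneg ht, min_eq_right (by linarith : 1 - t ≤ 1),
      max_eq_left (by linarith : -t ≤ 0), sub_zero]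
  · rw [abs_of_nonpos ht, min_eq_left (by linarith : (1:ℝ) ≤ 1 - t),
      max_eq_right (by linarith : (0:ℝ) ≤ -t), sub_neg_eq_add]

theorem intervalIntegral.integral_neg_self_eq_two_mul_of_even {f : ℝ → ℝ} {a : ℝ}
    (hf : ∀ x, f (-x) = f x) (hi : IntervalIntegrable f volume 0 a) :
    ∫ x in -a..a, f x = 2 * ∫ x in 0..a, f x := by
  have hi' : IntervalIntegrable f volume (-a) 0 := by
    simpa [hf] using ((IntervalIntegrable.iff_comp_neg (f := f)).mp hi).symm
  have hhalf : ∫ x in -a..0, f x = ∫ x in 0..a, f x := by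
    simpa [hf] using (intervalIntegral.integral_comp_neg (a := 0) (b := a) (f := f)).symm
  rw [← intervalIntegral.integral_add_adjacent_intervals hi' hi, hhalf]
  ring

theorem intervalIntegrable_and_integral_eq_sub_of_eqOn_Ioo {f g F : ℝ → ℝ} {a b : ℝ}
    (hab : a ≤ b) (hfg : EqOn f g (Ioo a b)) (hg : Continuous g)
    (hF : ∀ x, HasDerivAt F (g x) x) :
    IntervalIntegrable f volume a b ∧ ∫ x in a..b, f x = F b - F a := by
  refine ⟨(hg.intervalIntegrable a b).congr_uIoo ?_, ?_⟩
  · rw [uIoo_of_le hab]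
    exact hfg.symm
  · rw [intervalIntegral.integral_congr_Ioo_of_le hab hfg]
    exact intervalIntegral.integral_eq_sub_of_hasDerivAt (fun x _ ↦ hF x)
      (hg.intervalIntegrable a b)

namespace Real

theorem measurable_tan : Measurable tan := by
  rw [show tan = fun x ↦ sin x / cos x from funext tan_eq_sin_div_cos]
  fun_prop

theorem tan_lt_neg_one {x : ℝ} (h₁ : -(π/2) < x) (h₂ : x < -(π/4)) : tan x < -1 := by
  simpa using tan_lt_tan_of_lt_of_lt_pi_div_two h₁ (by linarith [pi_pos]) h₂

theorem neg_one_lt_tan {x : ℝ} (h₁ : -(π/4) < x) (h₂ : x < π/2) : -1 < tan x := by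
  simpa using tan_lt_tan_of_lt_of_lt_pi_div_two (by linarith [pi_pos]) h₂ h₁

theorem tan_lt_one {x : ℝ} (h₁ : -(π/2) < x) (h₂ : x < π/4) : tan x < 1 := by
  simpa using tan_lt_tan_of_lt_of_lt_pi_div_two h₁ (by linarith [pi_pos]) h₂

theorem one_lt_tan {x : ℝ} (h₁ : π/4 < x) (h₂ : x < π/2) : 1 < tan x := by
  simpa using tan_lt_tan_of_lt_of_lt_pi_div_two (by linarith [pi_pos]) h₂ h₁

end Real

/- A point `p = (φ, ξ)` is an angle of incidence `φ` together with an entry point `ξ` on the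
hypotenuse `[0, 1] × {0}`. -/
def leftLegRegion : Set (ℝ × ℝ) :=
  {p | p.1 ∈ Ioo (-(π/2)) (π/2) ∧ p.2 ∈ Icc 0 1 ∧ p.2 < -tan p.1}

def rightLegRegion : Set (ℝ × ℝ) :=
  {p | p.1 ∈ Ioo (-(π/2)) (π/2) ∧ p.2 ∈ Icc 0 1 ∧ 1 - tan p.1 < p.2}

def doubleReflectionRegion : Set (ℝ × ℝ) :=
  {p | p.1 ∈ Ioo (-(π/2)) (π/2) ∧ p.2 ∈ Icc 0 1 ∧ -tan p.1 < p.2 ∧ p.2 < 1 - tan p.1}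

theorem measurableSet_leftLegRegion : MeasurableSet leftLegRegion :=
  (measurable_fst measurableSet_Ioo).inter ((measurable_snd measurableSet_Icc).inter
    (measurableSet_lt measurable_snd (measurable_tan.comp measurable_fst).neg))

theorem measurableSet_doubleReflectionRegion : MeasurableSet doubleReflectionRegion :=
  (measurable_fst measurableSet_Ioo).inter ((measurable_snd measurableSet_Icc).inter
    ((measurableSet_lt (measurable_tan.comp measurable_fst).neg measurable_snd).inter
      (measurableSet_lt measurable_snd
        (measurable_const.sub (measurable_tan.comp measurable_fst)))))

theorem integral_rightLegRegion_eq_integral_leftLegRegion :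
    ∫ p in rightLegRegion, (1 + cos (2 * p.1 - π/2)) * cos p.1 =
      ∫ p in leftLegRegion, (1 + cos (π/2 + 2 * p.1)) * cos p.1 := by
  have hmp : MeasurePreserving (fun p : ℝ × ℝ ↦ (-p.1, 1 - p.2)) := by
    rw [Measure.volume_eq_prod]
    exact (Measure.measurePreserving_neg volume).prod
      (Measure.measurePreserving_sub_left volume 1)
  have hemb : MeasurableEmbedding (fun p : ℝ × ℝ ↦ (-p.1, 1 - p.2)) :=
    ((Homeomorph.neg ℝ).prodCongr (Homeomorph.subLeft 1)).measurableEmbedding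
  have hpre : (fun p : ℝ × ℝ ↦ (-p.1, 1 - p.2)) ⁻¹' leftLegRegion = rightLegRegion := by
    ext p
    simp only [leftLegRegion, rightLegRegion, mem_preimage, mem_ofPred_eq, mem_Ioo, mem_Icc,
      tan_neg]
    constructor <;> rintro ⟨⟨h₁, h₂⟩, ⟨h₃, h₄⟩, h₅⟩ <;>
      refine ⟨⟨?_, ?_⟩, ⟨?_, ?_⟩, ?_⟩ <;> linarith
  rw [← hpre, ← hmp.setIntegral_preimage_emb hemb _ leftLegRegion]
  congr 1 with p
  rw [cos_neg, show π/2 + 2 * -p.1 = -(2 * p.1 - π/2) by ring, cos_neg]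

theorem integral_leftLegSlice :
    ∫ x in -(π/2)..π/2, max (min 1 (-tan x)) 0 * ((1 + cos (π/2 + 2 * x)) * cos x) =
      2 - 2 * √2 / 3 := by
  have hπ := pi_pos
  have hcos : ∀ x, cos (π/2 + 2 * x) = -(2 * sin x * cos x) := fun x ↦ by
    rw [add_comm, cos_add_pi_div_two, sin_two_mul]
  set f : ℝ → ℝ := fun x ↦ max (min 1 (-tan x)) 0 * ((1 + cos (π/2 + 2 * x)) * cos x) with hf
  obtain ⟨hi₁, h₁⟩ := intervalIntegrable_and_integral_eq_sub_of_eqOn_Ioo (f := f)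
      (g := fun x ↦ (1 + cos (π/2 + 2 * x)) * cos x) (F := fun x ↦ sin x + 2/3 * cos x ^ 3)
      (by linarith : -(π/2) ≤ -(π/4))
      (fun x ⟨hx₁, hx₂⟩ ↦ by
        have := tan_lt_neg_one hx₁ hx₂
        simp only [hf]
        rw [min_eq_left (by linarith), max_eq_left zero_le_one, one_mul])
      (by fun_prop)
      (fun x ↦ ((hasDerivAt_sin x).add (((hasDerivAt_cos x).pow 3).const_mul (2/3))).congr_deriv
        (by rw [hcos]; ring))
  obtain ⟨hi₂, h₂⟩ := intervalIntegrable_and_integral_eq_sub_of_eqOn_Ioo (f := f)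
      (g := fun x ↦ -sin x * (1 + cos (π/2 + 2 * x))) (F := fun x ↦ cos x + 2/3 * sin x ^ 3)
      (by linarith : -(π/4) ≤ 0)
      (fun x ⟨hx₁, hx₂⟩ ↦ by
        have := neg_one_lt_tan hx₁ (by linarith)
        have := tan_neg_of_neg_of_pi_div_two_lt hx₂ (by linarith)
        simp only [hf]
        rw [min_eq_right (by linarith), max_eq_left (by linarith),
          ← tan_mul_cos (cos_pos_of_mem_Ioo ⟨by linarith, by linarith⟩).ne']
        ring)
      (by fun_prop)
      (fun x ↦ ((hasDerivAt_cos x).add (((hasDerivAt_sin x).pow 3).const_mul (2/3))).congr_deriv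
        (by rw [hcos]; ring))
  obtain ⟨hi₃, h₃⟩ := intervalIntegrable_and_integral_eq_sub_of_eqOn_Ioo (f := f)
      (g := fun _ ↦ 0) (F := fun _ ↦ 0) (by linarith : 0 ≤ π/2)
      (fun x ⟨hx₁, hx₂⟩ ↦ by
        have := tan_pos_of_pos_of_lt_pi_div_two hx₁ hx₂
        simp only [hf]
        rw [max_eq_right (by linarith [min_le_right 1 (-tan x)]), zero_mul])
      continuous_const (fun x ↦ hasDerivAt_const x 0)
  rw [← intervalIntegral.integral_add_adjacent_intervals hi₁ (hi₂.trans hi₃),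
    ← intervalIntegral.integral_add_adjacent_intervals hi₂ hi₃, h₁, h₂, h₃]
  simp only [sin_neg, cos_neg, sin_pi_div_four, cos_pi_div_four, sin_pi_div_two, cos_pi_div_two,
    sin_zero, cos_zero]
  linear_combination (√2 / 6) * sq_sqrt (zero_le_two : (0:ℝ) ≤ 2)

theorem integral_doubleReflectionSlice :
    ∫ x in -(π/2)..π/2, max (1 - |tan x|) 0 * (2 * cos x) = 4 * √2 - 4 := by
  have hπ := pi_pos
  set f : ℝ → ℝ := fun x ↦ max (1 - |tan x|) 0 * (2 * cos x) with hf
  obtain ⟨hi₁, h₁⟩ := intervalIntegrable_and_integral_eq_sub_of_eqOn_Ioo (f := f)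
      (g := fun x ↦ 2 * cos x - 2 * sin x) (F := fun x ↦ 2 * sin x + 2 * cos x)
      (by linarith : 0 ≤ π/4)
      (fun x ⟨hx₁, hx₂⟩ ↦ by
        have := tan_lt_one (by linarith) hx₂
        have := tan_pos_of_pos_of_lt_pi_div_two hx₁ (by linarith)
        simp only [hf]
        rw [abs_of_pos this, max_eq_left (by linarith),
          ← tan_mul_cos (cos_pos_of_mem_Ioo ⟨by linarith, by linarith⟩).ne']
        ring)
      (by fun_prop)
      (fun x ↦ (((hasDerivAt_sin x).const_mul 2).add ((hasDerivAt_cos x).const_mul 2)).congr_deriv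
        (by ring))
  obtain ⟨hi₂, h₂⟩ := intervalIntegrable_and_integral_eq_sub_of_eqOn_Ioo (f := f)
      (g := fun _ ↦ 0) (F := fun _ ↦ 0) (by linarith : π/4 ≤ π/2)
      (fun x ⟨hx₁, hx₂⟩ ↦ by
        have := one_lt_tan hx₁ hx₂
        simp only [hf]
        rw [abs_of_pos (by linarith), max_eq_right (by linarith), zero_mul])
      continuous_const (fun x ↦ hasDerivAt_const x 0)
  have heven : ∀ x, f (-x) = f x := fun x ↦ by simp only [hf, tan_neg, abs_neg, cos_neg]
  rw [intervalIntegral.integral_neg_self_eq_two_mul_of_even heven (hi₁.trans hi₂),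
    ← intervalIntegral.integral_add_adjacent_intervals hi₁ hi₂, h₁, h₂]
  simp only [sin_pi_div_four, cos_pi_div_four, sin_zero, cos_zero]
  ring

theorem integral_leftLegRegion :
    ∫ p in leftLegRegion, (1 + cos (π/2 + 2 * p.1)) * cos p.1 = 2 - 2 * √2 / 3 := by
  refine (setIntegral_comp_fst_eq_intervalIntegral_volume_real (by linarith [pi_pos])
    (t := fun x ↦ Icc 0 1 ∩ Iio (-tan x)) (fun _ ↦ inter_subset_left)
    measurableSet_leftLegRegion (g := fun x ↦ (1 + cos (π/2 + 2 * x)) * cos x)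
    (by fun_prop)).trans ?_
  simp only [volume_real_Icc_inter_Iio, sub_zero]
  exact integral_leftLegSlice

theorem integral_doubleReflectionRegion :
    ∫ p in doubleReflectionRegion, 2 * cos p.1 = 4 * √2 - 4 := by
  refine (setIntegral_comp_fst_eq_intervalIntegral_volume_real (by linarith [pi_pos])
    (t := fun x ↦ Icc 0 1 ∩ Ioo (-tan x) (1 - tan x)) (fun _ ↦ inter_subset_left)
    measurableSet_doubleReflectionRegion (g := fun x ↦ 2 * cos x) (by fun_prop)).trans ?_
  simp only [volume_real_Icc_inter_Ioo_neg_one_sub]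
  exact integral_doubleReflectionSlice

theorem isosceles_triangle_resistance :
    (3/8 : ℝ) *
      ((∫ p in {p : ℝ × ℝ | p.1 ∈ Set.Ioo (-(π/2)) (π/2) ∧
          p.2 ∈ Set.Icc (0:ℝ) 1 ∧ p.2 < -Real.tan p.1},
        (1 + Real.cos (π/2 + 2*p.1)) * Real.cos p.1) +
      (∫ p in {p : ℝ × ℝ | p.1 ∈ Set.Ioo (-(π/2)) (π/2) ∧
          p.2 ∈ Set.Icc (0:ℝ) 1 ∧ 1 - Real.tan p.1 < p.2},
        (1 + Real.cos (2*p.1 - π/2)) * Real.cos p.1) +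
      (∫ p in {p : ℝ × ℝ | p.1 ∈ Set.Ioo (-(π/2)) (π/2) ∧
          p.2 ∈ Set.Icc (0:ℝ) 1 ∧ -Real.tan p.1 < p.2 ∧ p.2 < 1 - Real.tan p.1},
        2 * Real.cos p.1)) = Real.sqrt 2 := by
  have h₁ := integral_leftLegRegion
  have h₂ := integral_rightLegRegion_eq_integral_leftLegRegion
  have h₃ := integral_doubleReflectionRegion
  simp only [leftLegRegion, rightLegRegion, doubleReflectionRegion] at h₁ h₂ h₃
  rw [h₂, h₁, h₃]
  ring
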